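/- Let 1 ≤ n ≤ g and let v_1, …, v_n ∈ H satisfy gcd(v_1,…,v_n) = 1; set S = span_ℤ(v_1,…,v_n). Then there exists a dual summand for v_1, …, v_n: an isotropic direct summand D ⊆ H of rank n with a basis u_1, …, u_n satisfying ω(v_i,u_j) = δ_{ij} for all i, j. Moreover S + D is a direct summand of H on which ω is nondegenerate, and H = (S + D) ⊕ (S + D)^⊥; in particular (S + D)^⊥ is the unique submodule T of H with H = (S ⊕ D) ⊕ T and ω(S + D, T) = 0. -/

import Mathlib

namespace Paper

/-- The standard symplectic form on `R^{2g}` with respect to the basis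
`a_1, b_1, …, a_g, b_g` (coordinates `2i, 2i+1` for `a_{i+1}, b_{i+1}`). -/
def symp {R : Type*} [CommRing R] {g : ℕ} (x y : Fin (2 * g) → R) : R :=
  ∑ i : Fin g,
    (x ⟨2 * i.1, by omega⟩ * y ⟨2 * i.1 + 1, by omega⟩ -
      x ⟨2 * i.1 + 1, by omega⟩ * y ⟨2 * i.1, by omega⟩)

theorem symp_add_left {R : Type*} [CommRing R] {g : ℕ} (x y a : Fin (2 * g) → R) :
    symp (x + y) a = symp x a + symp y a := by
  unfold symp
  rw [← Finset.sum_add_distrib]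
  exact Finset.sum_congr rfl fun i _ => by simp only [Pi.add_apply]; ring

theorem symp_smul_left {R : Type*} [CommRing R] {g : ℕ} (c : R) (x a : Fin (2 * g) → R) :
    symp (c • x) a = c * symp x a := by
  unfold symp
  rw [Finset.mul_sum]
  exact Finset.sum_congr rfl fun i _ => by simp only [Pi.smul_apply, smul_eq_mul]; ring

theorem symp_zero_left {R : Type*} [CommRing R] {g : ℕ} (a : Fin (2 * g) → R) :
    symp (0 : Fin (2 * g) → R) a = 0 := by
  unfold symp; simp

/-- The orthogonal complement `A^⊥ = {x | ω(x,a) = 0 for all a ∈ A}`. -/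
def perp {R : Type*} [CommRing R] {g : ℕ} (A : Set (Fin (2 * g) → R)) :
    Submodule R (Fin (2 * g) → R) where
  carrier := {x | ∀ a ∈ A, symp x a = 0}
  add_mem' := by
    intro x y hx hy a ha
    rw [symp_add_left, hx a ha, hy a ha, add_zero]
  zero_mem' := by
    intro a ha
    exact symp_zero_left a
  smul_mem' := by
    intro c x hx a ha
    rw [symp_smul_left, hx a ha, mul_zero]

/-- The submodule of vectors whose first `m` coordinates vanish.
`H_k = coordZero R (2*g) (2*(k-1))`, and `H₂ = coordZero R (2*(g+1)) 2`. -/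
def coordZero (R : Type*) [CommRing R] (n m : ℕ) : Submodule R (Fin n → R) where
  carrier := {v | ∀ j : Fin n, (j : ℕ) < m → v j = 0}
  add_mem' := by
    intro x y hx hy j hj
    have h1 := hx j hj
    have h2 := hy j hj
    simp [Pi.add_apply, h1, h2]
  zero_mem' := by intro j hj; rfl
  smul_mem' := by
    intro c x hx j hj
    have h1 := hx j hj
    simp [Pi.smul_apply, h1]

/-- The standard basis vector `a_{i+1}` (`i` is 0-indexed). -/
def stdA (R : Type*) [CommRing R] (g i : ℕ) : Fin (2 * g) → R :=
  fun j => if (j : ℕ) = 2 * i then 1 else 0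

/-- The standard basis vector `b_{i+1}` (`i` is 0-indexed). -/
def stdB (R : Type*) [CommRing R] (g i : ℕ) : Fin (2 * g) → R :=
  fun j => if (j : ℕ) = 2 * i + 1 then 1 else 0

/-- Regard an integer vector as a rational vector. -/
def qcast {n : ℕ} (v : Fin n → ℤ) : Fin n → ℚ := fun j => (v j : ℚ)

/-- The projection `pr₂` deleting the `a_1`- and `b_1`-coordinates. -/
def pr2 {R : Type*} [CommRing R] {n : ℕ} (v : Fin n → R) : Fin n → R :=
  fun j => if (j : ℕ) < 2 then 0 else v j

/-- `gcd(v_1, …, v_m) = 1`: the vectors are linearly independent and their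
ℤ-span is a direct summand. -/
def IsUnimodular {n m : ℕ} (v : Fin m → Fin n → ℤ) : Prop :=
  LinearIndependent ℤ v ∧
    ∃ C : Submodule ℤ (Fin n → ℤ), IsCompl (Submodule.span ℤ (Set.range v)) C

/-- A primitive vector. -/
def Primitive {n : ℕ} (v : Fin n → ℤ) : Prop := IsUnimodular ![v]

/-- The entries of `w` are pairwise `ω`-orthogonal. -/
def PairwiseOrth {g m : ℕ} (w : Fin m → Fin (2 * g) → ℤ) : Prop :=
  ∀ i j, i ≠ j → symp (w i) (w j) = 0

/-- `Λ³ W`: the span of all wedges of three vectors from `W` inside the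
exterior algebra. -/
def wedge3 {g : ℕ} (W : Submodule ℚ (Fin (2 * g) → ℚ)) :
    Submodule ℚ (ExteriorAlgebra ℚ (Fin (2 * g) → ℚ)) :=
  Submodule.span ℚ {x | ∃ z₁ ∈ W, ∃ z₂ ∈ W, ∃ z₃ ∈ W,
    x = ExteriorAlgebra.ι ℚ z₁ * ExteriorAlgebra.ι ℚ z₂ * ExteriorAlgebra.ι ℚ z₃}

/-- `u ∧ Λ² W`. -/
def uWedge2 {g : ℕ} (u : Fin (2 * g) → ℚ) (W : Submodule ℚ (Fin (2 * g) → ℚ)) :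
    Submodule ℚ (ExteriorAlgebra ℚ (Fin (2 * g) → ℚ)) :=
  Submodule.span ℚ {x | ∃ z₁ ∈ W, ∃ z₂ ∈ W,
    x = ExteriorAlgebra.ι ℚ u * ExteriorAlgebra.ι ℚ z₁ * ExteriorAlgebra.ι ℚ z₂}

/-- `u ∧ u' ∧ W`. -/
def uuWedge1 {g : ℕ} (u u' : Fin (2 * g) → ℚ) (W : Submodule ℚ (Fin (2 * g) → ℚ)) :
    Submodule ℚ (ExteriorAlgebra ℚ (Fin (2 * g) → ℚ)) :=
  Submodule.span ℚ {x | ∃ z ∈ W,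
    x = ExteriorAlgebra.ι ℚ u * ExteriorAlgebra.ι ℚ u' * ExteriorAlgebra.ι ℚ z}

/-- The simplicial differential: on the summand indexed by `w` it sends `z` to
`Σ_j (-1)^j · z` placed in the summand indexed by `∂_j w`. -/
noncomputable def diff (g p : ℕ)
    (ξ : (Fin (p + 1) → Fin (2 * g) → ℤ) →₀ ExteriorAlgebra ℚ (Fin (2 * g) → ℚ)) :
    (Fin p → Fin (2 * g) → ℤ) →₀ ExteriorAlgebra ℚ (Fin (2 * g) → ℚ) :=
  ξ.sum fun w z =>
    ∑ j : Fin (p + 1), ((-1 : ℚ) ^ (j : ℕ)) • Finsupp.single (fun i => w (j.succAbove i)) z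

/-- The gcd of the determinants of all maximal square submatrices of the matrix
whose columns are the `v i`. -/
def vgcd {ι : Type*} [Fintype ι] {m : ℕ} (v : Fin m → ι → ℤ) : ℕ :=
  Finset.univ.gcd fun r : Fin m → ι => (Matrix.det (Matrix.of fun i j => v j (r i))).natAbs

/-!
Since `v` spans a direct summand and `ω` is unimodular, `v` has a dual family. The partners
`u a` are then chosen one index at a time, keeping the invariant that the pairings with `v` and
with the partners already chosen can be prescribed arbitrarily. For the next index `a`, a vector
`u₀` with the right pairings is unique up to the joint kernel `K`, and a translate `u₀ + z`
preserves the invariant as soon as some `x ∈ K` has `ω(x, u₀ + z) = 1`. A descent on the least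
positive value of `ω(x, u₀ + z)` produces such a translate unless `K + ℤ u₀` is isotropic modulo
some prime `p`; this is impossible because, after projecting away the hyperbolic pairs already
built, `K + ℤ u₀` becomes the orthogonal of `n - 1 < g` vectors of `𝔽_p^{2g}`, whose dimension
exceeds `g`. Finally `ω(v i, u j) = δ_ij` with `u` isotropic makes `S + D` nondegenerate and
unimodular, so it splits off its orthogonal.
-/

section SympAlgebra

variable {R : Type*} [CommRing R] {g : ℕ}

theorem symp_self (x : Fin (2 * g) → R) : symp x x = 0 :=
  Finset.sum_eq_zero fun _ _ => by ring

theorem symp_swap (x y : Fin (2 * g) → R) : symp y x = -symp x y := by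
  rw [symp, symp, ← Finset.sum_neg_distrib]
  exact Finset.sum_congr rfl fun _ _ => by ring

theorem symp_add_right (x y z : Fin (2 * g) → R) :
    symp x (y + z) = symp x y + symp x z := by
  rw [symp_swap, symp_add_left, symp_swap y, symp_swap z]; ring

theorem symp_smul_right (c : R) (x y : Fin (2 * g) → R) :
    symp x (c • y) = c * symp x y := by
  rw [symp_swap, symp_smul_left, symp_swap y]; ring

variable (R g) in
def sympForm : LinearMap.BilinForm R (Fin (2 * g) → R) :=
  LinearMap.mk₂ R symp symp_add_left symp_smul_left symp_add_right symp_smul_right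

@[simp]
theorem sympForm_apply (x y : Fin (2 * g) → R) : sympForm R g x y = symp x y := rfl

theorem sympForm_isAlt : (sympForm R g).IsAlt := symp_self

theorem symp_sub_left (x y z : Fin (2 * g) → R) : symp (x - y) z = symp x z - symp y z :=
  LinearMap.map_sub₂ (sympForm R g) x y z

theorem symp_sub_right (x y z : Fin (2 * g) → R) : symp x (y - z) = symp x y - symp x z :=
  map_sub (sympForm R g x) y z

theorem symp_zero_right (x : Fin (2 * g) → R) : symp x 0 = 0 :=
  map_zero (sympForm R g x)

theorem symp_sum_left {ι : Type*} (s : Finset ι) (f : ι → Fin (2 * g) → R)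
    (y : Fin (2 * g) → R) : symp (∑ i ∈ s, f i) y = ∑ i ∈ s, symp (f i) y :=
  map_sum ((sympForm R g).flip y) f s

theorem symp_sum_right {ι : Type*} (s : Finset ι) (x : Fin (2 * g) → R)
    (f : ι → Fin (2 * g) → R) : symp x (∑ i ∈ s, f i) = ∑ i ∈ s, symp x (f i) :=
  map_sum (sympForm R g x) f s

theorem intCast_symp (x y : Fin (2 * g) → ℤ) :
    ((symp x y : ℤ) : R) = symp (fun j => (x j : R)) (fun j => (y j : R)) := by
  simp [symp]

theorem sum_fin_two_mul {M : Type*} [AddCommMonoid M] (F : Fin (2 * g) → M) :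
    ∑ j, F j = ∑ i : Fin g, (F ⟨2 * i, by omega⟩ + F ⟨2 * i + 1, by omega⟩) := by
  rw [← (finProdFinEquiv.trans (finCongr (mul_comm g 2))).sum_comp, Fintype.sum_prod_type]
  refine Finset.sum_congr rfl fun i _ => ?_
  rw [Fin.sum_univ_two]
  congr 1 <;> congr 1 <;> ext <;> simp [add_comm]

theorem exists_symp_eq (φ : (Fin (2 * g) → R) →ₗ[R] R) : ∃ w, ∀ x, symp x w = φ x := by
  let e : Fin (2 * g) → Fin (2 * g) → R := fun j k => if j = k then 1 else 0
  refine ⟨fun j => if h : j.1 % 2 = 0 then -φ (e ⟨j + 1, by omega⟩) else φ (e ⟨j - 1, by omega⟩),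
    fun x => ?_⟩
  rw [LinearMap.pi_apply_eq_sum_univ φ x, sum_fin_two_mul, symp]
  refine Finset.sum_congr rfl fun i _ => ?_
  simp [e]

theorem eq_zero_of_forall_symp_eq_zero {w : Fin (2 * g) → R} (h : ∀ x, symp x w = 0) :
    w = 0 := by
  funext j
  obtain ⟨y, hy⟩ := exists_symp_eq (g := g) (LinearMap.proj (R := R) j)
  simpa [symp_swap y w, h] using (hy w).symm

theorem sympForm_nondegenerate : (sympForm R g).Nondegenerate := by
  refine ⟨fun x hx => ?_, fun y hy => eq_zero_of_forall_symp_eq_zero hy⟩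
  exact eq_zero_of_forall_symp_eq_zero fun z => by rw [symp_swap, ← sympForm_apply, hx, neg_zero]

end SympAlgebra

theorem exists_mem_apply_ne_zero_of_finrank_lt {F V : Type*} [Field F] [AddCommGroup V]
    [Module F V] [FiniteDimensional F V] {B : LinearMap.BilinForm F V} (hB : B.Nondegenerate)
    {W : Submodule F V} (hW : Module.finrank F V < 2 * Module.finrank F W) :
    ∃ x ∈ W, ∃ y ∈ W, B x y ≠ 0 := by
  by_contra! hiso
  have hle : W ≤ B.orthogonal W := fun y hy x hx => hiso x hx y hy
  have := Submodule.finrank_mono hle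
  rw [LinearMap.BilinForm.finrank_orthogonal hB] at this
  omega

section Dual

variable {g : ℕ}

theorem mem_perp_range {ι : Type*} {c : ι → Fin (2 * g) → ℤ} {x : Fin (2 * g) → ℤ} :
    x ∈ perp (Set.range c) ↔ ∀ i, symp (c i) x = 0 := by
  simp only [perp, Submodule.mem_mk, AddSubmonoid.mem_mk, AddSubsemigroup.mem_mk,
    Set.mem_ofPred_eq, Set.forall_mem_range]
  exact forall_congr' fun i => by rw [symp_swap, neg_eq_zero]

def SympSurjective {ι : Type*} (c : ι → Fin (2 * g) → ℤ) : Prop :=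
  ∀ t : ι → ℤ, ∃ x, ∀ i, symp (c i) x = t i

theorem sympSurjective_of_symp_eq_ite {ι : Type*} [Fintype ι] [DecidableEq ι]
    {c q : ι → Fin (2 * g) → ℤ} (hq : ∀ i j, symp (c i) (q j) = if i = j then 1 else 0) :
    SympSurjective c := fun t =>
  ⟨∑ j, t j • q j, fun i => by
    simp only [symp_sum_right, symp_smul_right, hq, mul_ite, mul_one, mul_zero,
      Finset.sum_ite_eq, Finset.mem_univ, if_true]⟩

theorem exists_symp_eq_ite_of_isUnimodular {n : ℕ} {v : Fin n → Fin (2 * g) → ℤ}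
    (hv : IsUnimodular v) :
    ∃ q : Fin n → Fin (2 * g) → ℤ, ∀ i j, symp (v i) (q j) = if i = j then 1 else 0 := by
  obtain ⟨hli, C, hC⟩ := hv
  let b := Module.Basis.span hli
  choose q hq using fun j =>
    exists_symp_eq (b.coord j ∘ₗ Submodule.projectionOnto _ _ hC)
  refine ⟨q, fun i j => ?_⟩
  have hb : v i = b i := by simp [b, Module.Basis.span_apply]
  rw [hq, LinearMap.comp_apply, hb, Submodule.projectionOnto_apply_left,
    Module.Basis.coord_apply, Module.Basis.repr_self, Finsupp.single_apply]

theorem exists_mem_perp_intCast_eq {ι : Type*} {d : ι → Fin (2 * g) → ℤ} (hd : SympSurjective d)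
    {p : ℕ} [NeZero p] {x : Fin (2 * g) → ZMod p}
    (hx : ∀ i, symp (fun j => (d i j : ZMod p)) x = 0) :
    ∃ y ∈ perp (Set.range d), (fun j => (y j : ZMod p)) = x := by
  set y₀ : Fin (2 * g) → ℤ := fun j => ((x j).cast : ℤ)
  have hy₀ : (fun j => (y₀ j : ZMod p)) = x := funext fun j => ZMod.intCast_zmod_cast (x j)
  have hdvd : ∀ i, (p : ℤ) ∣ symp (d i) y₀ := fun i => by
    rw [← ZMod.intCast_zmod_eq_zero_iff_dvd, intCast_symp, hy₀, hx]
  choose t ht using hdvd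
  obtain ⟨w, hw⟩ := hd t
  refine ⟨y₀ - (p : ℤ) • w, mem_perp_range.mpr fun i => ?_, funext fun j => ?_⟩
  · rw [symp_sub_right, symp_smul_right, hw, ← ht, sub_self]
  · simp [← congrFun hy₀ j]

theorem exists_mem_perp_not_dvd {ι : Type*} [Fintype ι] {d : ι → Fin (2 * g) → ℤ}
    (hd : SympSurjective d) (hι : Fintype.card ι < g) {p : ℕ} (hp : p.Prime) :
    ∃ x ∈ perp (Set.range d), ∃ y ∈ perp (Set.range d), ¬ (p : ℤ) ∣ symp x y := by
  have := Fact.mk hp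
  let Φ : (Fin (2 * g) → ZMod p) →ₗ[ZMod p] ι → ZMod p :=
    LinearMap.pi fun i => sympForm (ZMod p) g (fun j => (d i j : ZMod p))
  have hrank := LinearMap.finrank_range_add_finrank_ker Φ
  have hrange : Module.finrank (ZMod p) (LinearMap.range Φ) ≤ Fintype.card ι :=
    (Submodule.finrank_le _).trans (Module.finrank_fintype_fun_eq_card _).le
  rw [Module.finrank_fin_fun] at hrank
  obtain ⟨x, hx, y, hy, hxy⟩ :=
    exists_mem_apply_ne_zero_of_finrank_lt sympForm_nondegenerate (W := LinearMap.ker Φ)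
      (by rw [Module.finrank_fin_fun]; omega)
  have hlift : ∀ z ∈ LinearMap.ker Φ, ∃ y ∈ perp (Set.range d), (fun j => (y j : ZMod p)) = z :=
    fun z hz => exists_mem_perp_intCast_eq hd fun i => congrFun hz i
  obtain ⟨x', hx', rfl⟩ := hlift x hx
  obtain ⟨y', hy', rfl⟩ := hlift y hy
  refine ⟨x', hx', y', hy', fun h => hxy ?_⟩
  rwa [sympForm_apply, ← intCast_symp, ZMod.intCast_zmod_eq_zero_iff_dvd]

end Dual

theorem exists_isCoprime_mul_eq_mul (s t : ℤ) : ∃ α β : ℤ, IsCoprime α β ∧ α * s = β * t := by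
  rcases (Int.gcd s t).eq_zero_or_pos with h | h
  · obtain ⟨rfl, rfl⟩ := Int.gcd_eq_zero_iff.mp h
    exact ⟨1, 0, isCoprime_one_left, by ring⟩
  · obtain ⟨e, s', t', -, hst, rfl, rfl⟩ := Int.exists_gcd_one' h
    exact ⟨t', s', Int.isCoprime_iff_gcd_eq_one.mpr (by rwa [Int.gcd_comm]), by ring⟩

section Descent

variable {E : Type*} [AddCommGroup E] {B : LinearMap.BilinForm ℤ E} {K : Submodule ℤ E}

theorem exists_not_dvd_of_dvd_apply (hB : B.IsAlt) {u : E} {p : ℤ} (hu : ∀ x ∈ K, p ∣ B x u)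
    (h : ∃ x ∈ K ⊔ ℤ ∙ u, ∃ y ∈ K ⊔ ℤ ∙ u, ¬ p ∣ B x y) : ∃ x ∈ K, ∃ y ∈ K, ¬ p ∣ B x y := by
  obtain ⟨x, hx, y, hy, hxy⟩ := h
  obtain ⟨k, hk, _, ha, rfl⟩ := Submodule.mem_sup.mp hx
  obtain ⟨a, rfl⟩ := Submodule.mem_span_singleton.mp ha
  obtain ⟨k', hk', _, hb, rfl⟩ := Submodule.mem_sup.mp hy
  obtain ⟨b, rfl⟩ := Submodule.mem_span_singleton.mp hb
  refine ⟨k, hk, k', hk', fun hkk' => hxy ?_⟩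
  have hexp : B (k + a • u) (k' + b • u) = B k k' + b * B k u - a * B k' u := by
    simp [hB.self_eq_zero, ← hB.neg_eq u k']
  rw [hexp]
  exact dvd_sub (dvd_add hkk' (dvd_mul_of_dvd_right (hu k hk) b))
    (dvd_mul_of_dvd_right (hu k' hk') a)

theorem exists_apply_eq_zero_not_dvd (hB : B.IsAlt) {p : ℤ} (hp : Prime p) (x₀ : E)
    {k k' : E} (hk : k ∈ K) (hk' : k' ∈ K) (hkk' : ¬ p ∣ B k k') :
    ∃ w ∈ K, B x₀ w = 0 ∧ ∃ ξ ∈ K, ¬ p ∣ B ξ w := by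
  obtain ⟨α, β, hαβ, hst⟩ := exists_isCoprime_mul_eq_mul (B x₀ k') (B x₀ k)
  refine ⟨α • k' - β • k, sub_mem (K.smul_mem α hk') (K.smul_mem β hk),
    by simp [hst], ?_⟩
  by_cases hα : p ∣ α
  · refine ⟨k', hk', fun h => ?_⟩
    have hβ : ¬ p ∣ β := fun hβ => hp.not_isUnit (hαβ.isUnit_of_dvd' hα hβ)
    have : B k' (α • k' - β • k) = β * B k k' := by
      simp [hB.self_eq_zero, ← hB.neg_eq k k']
    rw [this] at h
    exact (hp.dvd_or_dvd h).elim hβ hkk'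
  · refine ⟨k, hk, fun h => ?_⟩
    have : B k (α • k' - β • k) = α * B k k' := by simp [hB.self_eq_zero]
    rw [this] at h
    exact (hp.dvd_or_dvd h).elim hα hkk'

theorem dvd_apply_of_forall_le {u z x₀ : E} {d : ℕ} (hx₀ : x₀ ∈ K) (hd : B x₀ (u + z) = d)
    (hmin : ∀ x ∈ K, 0 < B x (u + z) → (d : ℤ) ≤ B x (u + z)) (hd0 : 0 < d) :
    ∀ x ∈ K, (d : ℤ) ∣ B x (u + z) := by
  intro x hx
  have hd0' : (0 : ℤ) < d := by exact_mod_cast hd0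
  have hrem : B (x - (B x (u + z) / d) • x₀) (u + z) = B x (u + z) % d := by
    simp [hd, Int.emod_def, mul_comm]
  have hlt := Int.emod_lt_of_pos (B x (u + z)) hd0'
  have hnn := Int.emod_nonneg (B x (u + z)) hd0'.ne'
  refine Int.dvd_of_emod_eq_zero (le_antisymm ?_ hnn)
  by_contra! hpos
  have := hmin _ (sub_mem hx (K.smul_mem _ hx₀)) (hrem ▸ hpos)
  omega

theorem sup_span_singleton_add_eq {u z : E} (hz : z ∈ K) : K ⊔ ℤ ∙ (u + z) = K ⊔ ℤ ∙ u := by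
  have hu : u ∈ K ⊔ ℤ ∙ u := Submodule.mem_sup_right (Submodule.mem_span_singleton_self u)
  have huz : u + z ∈ K ⊔ ℤ ∙ (u + z) :=
    Submodule.mem_sup_right (Submodule.mem_span_singleton_self _)
  refine le_antisymm (sup_le le_sup_left ?_) (sup_le le_sup_left ?_) <;>
    rw [Submodule.span_singleton_le_iff_mem]
  · exact add_mem hu (Submodule.mem_sup_left hz)
  · simpa using sub_mem huz (Submodule.mem_sup_left hz)

theorem exists_apply_add_eq_one (hB : B.IsAlt) (u : E)
    (h : ∀ p : ℕ, p.Prime → ∃ x ∈ K ⊔ ℤ ∙ u, ∃ y ∈ K ⊔ ℤ ∙ u, ¬ (p : ℤ) ∣ B x y) :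
    ∃ x ∈ K, ∃ z ∈ K, B x (u + z) = 1 := by
  have hK : ∀ z ∈ K, ∀ p : ℕ, p.Prime → (∀ x ∈ K, (p : ℤ) ∣ B x (u + z)) →
      ∃ k ∈ K, ∃ k' ∈ K, ¬ (p : ℤ) ∣ B k k' := fun z hz p hp hdvd =>
    exists_not_dvd_of_dvd_apply hB hdvd (by rw [sup_span_singleton_add_eq hz]; exact h p hp)
  have hex : ∃ d : ℕ, 0 < d ∧ ∃ x ∈ K, ∃ z ∈ K, B x (u + z) = d := by
    obtain ⟨x, hx, z, hz, hne⟩ : ∃ x ∈ K, ∃ z ∈ K, B x (u + z) ≠ 0 := by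
      by_contra! h0
      have hu : ∀ x ∈ K, B x u = 0 := fun x hx => by simpa using h0 x hx 0 K.zero_mem
      obtain ⟨k, hk, k', hk', hkk'⟩ :=
        hK 0 K.zero_mem 2 Nat.prime_two fun x hx => by simp [hu x hx]
      have := h0 k hk k' hk'
      rw [map_add, hu k hk, zero_add] at this
      exact hkk' (this ▸ dvd_zero _)
    rcases hne.lt_or_gt with hneg | hpos
    · exact ⟨(B x (u + z)).natAbs, by omega, -x, neg_mem hx, z, hz, by
      rw [map_neg, LinearMap.neg_apply]; omega⟩
    · exact ⟨(B x (u + z)).natAbs, by omega, x, hx, z, hz, by omega⟩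
  classical
  obtain ⟨hd0, x₀, hx₀, z, hz, hx₀z⟩ := Nat.find_spec hex
  set d := Nat.find hex
  have hdvd : ∀ z ∈ K, B x₀ (u + z) = d → ∀ x ∈ K, (d : ℤ) ∣ B x (u + z) :=
    fun z hz hzd => dvd_apply_of_forall_le hx₀ hzd (fun x hx hpos => by
      have := Nat.find_min' hex ⟨by omega, x, hx, z, hz, (Int.toNat_of_nonneg hpos.le).symm⟩
      omega) hd0
  by_cases hd1 : d = 1
  · exact ⟨x₀, hx₀, z, hz, by rw [hx₀z, hd1, Nat.cast_one]⟩
  have hp := Nat.minFac_prime hd1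
  have hpd : (d.minFac : ℤ) ∣ d := Int.natCast_dvd_natCast.mpr (Nat.minFac_dvd d)
  obtain ⟨k, hk, k', hk', hkk'⟩ := hK z hz _ hp fun x hx => hpd.trans (hdvd z hz hx₀z x hx)
  obtain ⟨w, hw, hx₀w, ξ, hξ, hξw⟩ :=
    exists_apply_eq_zero_not_dvd hB (Nat.prime_iff_prime_int.mp hp) x₀ hk hk' hkk'
  have hzw : B x₀ (u + (z + w)) = d := by rw [← add_assoc, map_add, hx₀z, hx₀w, add_zero]
  have h1 := hpd.trans (hdvd (z + w) (add_mem hz hw) hzw ξ hξ)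
  rw [← add_assoc, map_add] at h1
  exact absurd ((dvd_add_right (hpd.trans (hdvd z hz hx₀z ξ hξ))).mp h1) hξw

end Descent

section PartialDual

variable {g n : ℕ} {v u : Fin n → Fin (2 * g) → ℤ} {s : Finset (Fin n)}

theorem mem_perp_range_union_image {x : Fin (2 * g) → ℤ} :
    x ∈ perp (Set.range v ∪ u '' s) ↔ (∀ i, symp (v i) x = 0) ∧ ∀ j ∈ s, symp (u j) x = 0 := by
  simp only [perp, Submodule.mem_mk, AddSubmonoid.mem_mk, AddSubsemigroup.mem_mk,
    Set.mem_ofPred_eq, Set.mem_union, or_imp, forall_and, Set.forall_mem_range,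
    Set.forall_mem_image]
  simp only [symp_swap x, neg_eq_zero, Finset.mem_coe]

structure IsPartialDual (v u : Fin n → Fin (2 * g) → ℤ) (s : Finset (Fin n)) : Prop where
  symp_eq : ∀ i, ∀ j ∈ s, symp (v i) (u j) = if i = j then 1 else 0
  isotropic : ∀ i ∈ s, ∀ j ∈ s, symp (u i) (u j) = 0
  surjective :
    ∀ t t' : Fin n → ℤ, ∃ x, (∀ i, symp (v i) x = t i) ∧ ∀ j ∈ s, symp (u j) x = t' j

theorem isPartialDual_empty (hv : SympSurjective v) (u : Fin n → Fin (2 * g) → ℤ) :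
    IsPartialDual v u ∅ where
  symp_eq := by simp
  isotropic := by simp
  surjective t _ := (hv t).imp fun _ hx => ⟨hx, by simp⟩

def pairProj (v u : Fin n → Fin (2 * g) → ℤ) (s : Finset (Fin n)) (x : Fin (2 * g) → ℤ) :
    Fin (2 * g) → ℤ :=
  x - ∑ j ∈ s, symp (v j) x • u j

namespace IsPartialDual

variable (h : IsPartialDual v u s)
include h

theorem symp_pairProj (i : Fin n) (x : Fin (2 * g) → ℤ) :
    symp (v i) (pairProj v u s x) = if i ∈ s then 0 else symp (v i) x := by
  rw [pairProj, symp_sub_right, symp_sum_right,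
    Finset.sum_congr rfl fun j hj => by rw [symp_smul_right, h.symp_eq i j hj]]
  split_ifs with hi <;> simp [hi]

theorem symp_pairProj_eq_zero {x : Fin (2 * g) → ℤ} (hx : ∀ j ∈ s, symp (u j) x = 0) {k : Fin n}
    (hk : k ∈ s) : symp (u k) (pairProj v u s x) = 0 := by
  rw [pairProj, symp_sub_right, symp_sum_right, Finset.sum_eq_zero fun j hj => by
    rw [symp_smul_right, h.isotropic k hk j hj, mul_zero], hx k hk, sub_zero]

theorem symp_pairProj_pairProj {x y : Fin (2 * g) → ℤ} (hx : ∀ j ∈ s, symp (u j) x = 0)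
    (hy : ∀ j ∈ s, symp (u j) y = 0) : symp (pairProj v u s x) (pairProj v u s y) = symp x y := by
  rw [pairProj, symp_sub_left, symp_sum_left, Finset.sum_eq_zero fun j hj => by
      rw [symp_smul_left, h.symp_pairProj_eq_zero hy hj, mul_zero],
    sub_zero, pairProj, symp_sub_right, symp_sum_right, Finset.sum_eq_zero fun j hj => by
      rw [symp_smul_right, symp_swap (u j) x, hx j hj, neg_zero, mul_zero], sub_zero]

theorem sympSurjective_ite {a : Fin n} [DecidablePred (· ∈ s)] :
    SympSurjective fun i : {i // i ≠ a} => if (i : Fin n) ∈ s then u i else v i := fun t => by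
  let t₀ : Fin n → ℤ := fun i => if hi : i = a then 0 else t ⟨i, hi⟩
  obtain ⟨x, hxv, hxu⟩ := h.surjective t₀ t₀
  refine ⟨x, fun i => ?_⟩
  by_cases hi : (i : Fin n) ∈ s <;> simp [t₀, hi, hxv, hxu, i.2]

/-- The family `d` below consists of the `v i` with `i ∉ insert a s` and the `u j` with `j ∈ s`:
`n - 1 < g` vectors. Modulo `p` their orthogonal has dimension `> g`, so it is not isotropic, and
`pairProj` maps it into `perp (range v ∪ u '' s) + ℤ u₀` without changing the form. -/
theorem exists_not_dvd (hng : n ≤ g) {a : Fin n} (ha : a ∉ s) {u₀ : Fin (2 * g) → ℤ}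
    (hu₀v : ∀ i, symp (v i) u₀ = if i = a then 1 else 0) (hu₀u : ∀ j ∈ s, symp (u j) u₀ = 0)
    {p : ℕ} (hp : p.Prime) :
    ∃ x ∈ perp (Set.range v ∪ u '' s) ⊔ ℤ ∙ u₀, ∃ y ∈ perp (Set.range v ∪ u '' s) ⊔ ℤ ∙ u₀,
      ¬ (p : ℤ) ∣ symp x y := by
  classical
  set d : {i // i ≠ a} → Fin (2 * g) → ℤ := fun i => if (i : Fin n) ∈ s then u i else v i
  have hcard : Fintype.card {i // i ≠ a} < g := by
    simp only [ne_eq, Fintype.card_subtype_compl, Fintype.card_fin, Fintype.card_unique]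
    have := a.pos
    omega
  have hperp : ∀ x ∈ perp (Set.range d), (∀ i, i ≠ a → i ∉ s → symp (v i) x = 0) ∧
      ∀ j ∈ s, symp (u j) x = 0 := fun x hx => by
    rw [mem_perp_range] at hx
    exact ⟨fun i hia his => by simpa [d, his] using hx ⟨i, hia⟩,
      fun j hj => by simpa [d, hj] using hx ⟨j, ne_of_mem_of_not_mem hj ha⟩⟩
  have hmem : ∀ x ∈ perp (Set.range d), pairProj v u s x ∈ perp (Set.range v ∪ u '' s) ⊔ ℤ ∙ u₀ :=
    fun x hx => by
      refine Submodule.mem_sup.mpr ⟨pairProj v u s x - symp (v a) x • u₀, ?_, symp (v a) x • u₀,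
        Submodule.smul_mem _ _ (Submodule.mem_span_singleton_self u₀), sub_add_cancel _ _⟩
      refine mem_perp_range_union_image.mpr ⟨fun i => ?_, fun k hk => ?_⟩
      · rw [symp_sub_right, symp_smul_right, hu₀v, h.symp_pairProj]
        by_cases hia : i = a
        · subst hia; simp [ha]
        · by_cases his : i ∈ s <;> simp [his, hia, (hperp x hx).1 i hia]
      · rw [symp_sub_right, symp_smul_right, h.symp_pairProj_eq_zero (hperp x hx).2 hk,
          hu₀u k hk, mul_zero, sub_zero]
  obtain ⟨x, hx, y, hy, hxy⟩ := exists_mem_perp_not_dvd h.sympSurjective_ite hcard hp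
  refine ⟨_, hmem x hx, _, hmem y hy, ?_⟩
  rwa [h.symp_pairProj_pairProj (hperp x hx).2 (hperp y hy).2]

theorem update {a : Fin n} (ha : a ∉ s) {x y : Fin (2 * g) → ℤ}
    (hyv : ∀ i, symp (v i) y = if i = a then 1 else 0) (hyu : ∀ j ∈ s, symp (u j) y = 0)
    (hx : x ∈ perp (Set.range v ∪ u '' s)) (hxy : symp x y = 1) :
    IsPartialDual v (Function.update u a y) (insert a s) := by
  classical
  obtain ⟨hxv, hxu⟩ := mem_perp_range_union_image.mp hx
  have hne : ∀ j ∈ s, j ≠ a := fun j hj => ne_of_mem_of_not_mem hj ha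
  refine ⟨fun i j hj => ?_, fun i hi j hj => ?_, fun t t' => ?_⟩
  · rcases Finset.mem_insert.mp hj with rfl | hj
    · simp [hyv]
    · simp [hne j hj, h.symp_eq i j hj]
  · have hmem : ∀ k ∈ insert a s, k ≠ a → k ∈ s := fun k hk hka =>
      (Finset.mem_insert.mp hk).resolve_left hka
    simp only [Function.update_apply]
    split_ifs with hia hja hja
    · exact symp_self y
    · rw [symp_swap, hyu j (hmem j hj hja), neg_zero]
    · exact hyu i (hmem i hi hia)
    · exact h.isotropic i (hmem i hi hia) j (hmem j hj hja)
  · obtain ⟨x₀, hx₀v, hx₀u⟩ := h.surjective t t'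
    refine ⟨x₀ + (symp y x₀ - t' a) • x, fun i => ?_, fun j hj => ?_⟩
    · rw [symp_add_right, symp_smul_right, hx₀v, hxv, mul_zero, add_zero]
    · rcases Finset.mem_insert.mp hj with rfl | hj
      · rw [Function.update_self, symp_add_right, symp_smul_right, symp_swap x y, hxy]
        ring
      · rw [Function.update_of_ne (hne j hj), symp_add_right, symp_smul_right, hx₀u j hj,
          hxu j hj, mul_zero, add_zero]

end IsPartialDual

theorem exists_isPartialDual (hng : n ≤ g) (hv : SympSurjective v) (s : Finset (Fin n)) :
    ∃ u, IsPartialDual v u s := by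
  classical
  induction s using Finset.induction_on with
  | empty => exact ⟨0, isPartialDual_empty hv 0⟩
  | insert a s ha ih =>
    obtain ⟨u, hu⟩ := ih
    obtain ⟨u₀, hu₀v, hu₀u⟩ := hu.surjective (fun i => if i = a then 1 else 0) 0
    obtain ⟨x, hx, z, hz, hxz⟩ := exists_apply_add_eq_one (B := sympForm ℤ g) sympForm_isAlt u₀
      fun p hp => hu.exists_not_dvd hng ha hu₀v hu₀u hp
    obtain ⟨hzv, hzu⟩ := mem_perp_range_union_image.mp hz
    refine ⟨_, hu.update ha (y := u₀ + z) (fun i => ?_) (fun j hj => ?_) hx hxz⟩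
    · rw [symp_add_right, hu₀v, hzv, add_zero]
    · rw [symp_add_right, hu₀u j hj, hzu j hj, add_zero, Pi.zero_apply]

end PartialDual

section Complement

variable {R : Type*} [CommRing R] {g : ℕ} {W : Submodule R (Fin (2 * g) → R)}

theorem isCompl_perp (hW : ∀ x ∈ W, (∀ y ∈ W, symp x y = 0) → x = 0)
    (hdec : ∀ x, ∃ m ∈ W, x - m ∈ perp (W : Set (Fin (2 * g) → R))) :
    IsCompl W (perp (W : Set (Fin (2 * g) → R))) := by
  refine ⟨Submodule.disjoint_def.mpr fun x hxW hxP => hW x hxW hxP, ?_⟩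
  refine codisjoint_iff.mpr (eq_top_iff.mpr fun x _ => ?_)
  obtain ⟨m, hm, hxm⟩ := hdec x
  exact Submodule.mem_sup.mpr ⟨m, hm, x - m, hxm, add_sub_cancel m x⟩

theorem eq_perp_of_isCompl (hW : IsCompl W (perp (W : Set (Fin (2 * g) → R))))
    {T : Submodule R (Fin (2 * g) → R)} (hT : IsCompl W T)
    (horth : ∀ s ∈ W, ∀ t ∈ T, symp s t = 0) : T = perp (W : Set (Fin (2 * g) → R)) := by
  have hle : T ≤ perp (W : Set (Fin (2 * g) → R)) := fun t ht s hs => by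
    rw [symp_swap, horth s hs t ht, neg_zero]
  calc T = perp (W : Set (Fin (2 * g) → R)) ⊓ W ⊔ T := by rw [hW.symm.inf_eq_bot, bot_sup_eq]
    _ = perp (W : Set (Fin (2 * g) → R)) ⊓ (W ⊔ T) := inf_sup_assoc_of_le W hle
    _ = perp (W : Set (Fin (2 * g) → R)) := by rw [hT.sup_eq_top, inf_top_eq]

end Complement

section DualSummand

variable {g n : ℕ} {v u : Fin n → Fin (2 * g) → ℤ}

theorem mem_perp_sup_span {y : Fin (2 * g) → ℤ} (hv : ∀ i, symp y (v i) = 0)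
    (hu : ∀ i, symp y (u i) = 0) :
    y ∈ perp ((Submodule.span ℤ (Set.range v) ⊔ Submodule.span ℤ (Set.range u) :
      Submodule ℤ (Fin (2 * g) → ℤ)) : Set (Fin (2 * g) → ℤ)) := by
  have : Submodule.span ℤ (Set.range v) ⊔ Submodule.span ℤ (Set.range u) ≤
      LinearMap.ker (sympForm ℤ g y) := by
    simp only [sup_le_iff, Submodule.span_le, Set.range_subset_iff]
    exact ⟨hv, hu⟩
  exact fun a ha => this ha

variable (hvu : ∀ i j, symp (v i) (u j) = if i = j then 1 else 0)
include hvu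

theorem isUnimodular_of_symp_eq_ite : IsUnimodular u := by
  have hcomb : ∀ (c : Fin n → ℤ) i, symp (v i) (∑ j, c j • u j) = c i := fun c i => by
    simp only [symp_sum_right, symp_smul_right, hvu, mul_ite, mul_one, mul_zero,
      Finset.sum_ite_eq, Finset.mem_univ, if_true]
  refine ⟨Fintype.linearIndependent_iff.mpr fun c hc i => by rw [← hcomb c i, hc, symp_zero_right],
    ?_⟩
  let P : (Fin (2 * g) → ℤ) →ₗ[ℤ] Fin (2 * g) → ℤ := ∑ j, (sympForm ℤ g (v j)).smulRight (u j)
  have hP : ∀ x, P x = ∑ j, symp (v j) x • u j := fun x => by simp [P]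
  have hPmem : ∀ x, P x ∈ Submodule.span ℤ (Set.range u) := fun x => by
    rw [hP]
    exact Submodule.sum_mem _ fun j _ => Submodule.smul_mem _ _ (Submodule.subset_span ⟨j, rfl⟩)
  have hPid : Submodule.span ℤ (Set.range u) ≤ LinearMap.eqLocus P LinearMap.id := by
    rw [Submodule.span_le]
    rintro _ ⟨k, rfl⟩
    simp [hP, hvu, ite_smul]
  exact ⟨_, LinearMap.isCompl_of_proj (f := P.codRestrict _ hPmem) fun x => Subtype.ext (hPid x.2)⟩

theorem symp_sum_add_sum_v (a b : Fin n → ℤ) (k : Fin n) :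
    symp (∑ j, a j • v j + ∑ j, b j • u j) (v k) = ∑ j, a j * symp (v j) (v k) - b k := by
  simp only [symp_add_left, symp_sum_left, symp_smul_left, symp_swap (v _) (u _), hvu, mul_neg,
    mul_ite, mul_one, mul_zero, Finset.sum_neg_distrib, Finset.sum_ite_eq, Finset.mem_univ,
    if_true, ← sub_eq_add_neg]

variable (hu : ∀ i j, symp (u i) (u j) = 0)
include hu

theorem symp_sum_add_sum_u (a b : Fin n → ℤ) (k : Fin n) :
    symp (∑ j, a j • v j + ∑ j, b j • u j) (u k) = a k := by
  simp only [symp_add_left, symp_sum_left, symp_smul_left, hvu, hu, mul_ite, mul_one, mul_zero,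
    Finset.sum_ite_eq', Finset.mem_univ, if_true, Finset.sum_const_zero, add_zero]

theorem eq_zero_of_mem_sup_span (x : Fin (2 * g) → ℤ)
    (hx : x ∈ Submodule.span ℤ (Set.range v) ⊔ Submodule.span ℤ (Set.range u))
    (h : ∀ y ∈ Submodule.span ℤ (Set.range v) ⊔ Submodule.span ℤ (Set.range u), symp x y = 0) :
    x = 0 := by
  obtain ⟨_, ha, _, hb, rfl⟩ := Submodule.mem_sup.mp hx
  obtain ⟨a, rfl⟩ := (Submodule.mem_span_range_iff_exists_fun ℤ).mp ha
  obtain ⟨b, rfl⟩ := (Submodule.mem_span_range_iff_exists_fun ℤ).mp hb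
  have ha : a = 0 := funext fun k => by
    rw [← symp_sum_add_sum_u hvu hu a b k]
    exact h _ (Submodule.mem_sup_right (Submodule.subset_span ⟨k, rfl⟩))
  have hb : b = 0 := funext fun k => by
    have := h _ (Submodule.mem_sup_left (Submodule.subset_span ⟨k, rfl⟩))
    rw [symp_sum_add_sum_v hvu, ha] at this
    simpa using this
  simp [ha, hb]

theorem exists_sub_mem_perp_sup_span (x : Fin (2 * g) → ℤ) :
    ∃ m ∈ Submodule.span ℤ (Set.range v) ⊔ Submodule.span ℤ (Set.range u),
      x - m ∈ perp ((Submodule.span ℤ (Set.range v) ⊔ Submodule.span ℤ (Set.range u) :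
        Submodule ℤ (Fin (2 * g) → ℤ)) : Set (Fin (2 * g) → ℤ)) := by
  set a : Fin n → ℤ := fun j => symp x (u j)
  set b : Fin n → ℤ := fun k => ∑ j, a j * symp (v j) (v k) - symp x (v k)
  refine ⟨∑ j, a j • v j + ∑ j, b j • u j,
    Submodule.add_mem_sup ((Submodule.mem_span_range_iff_exists_fun ℤ).mpr ⟨a, rfl⟩)
      ((Submodule.mem_span_range_iff_exists_fun ℤ).mpr ⟨b, rfl⟩),
    mem_perp_sup_span (fun k => ?_) (fun k => ?_)⟩
  · rw [symp_sub_left, symp_sum_add_sum_v hvu]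
    simp [b]
  · rw [symp_sub_left, symp_sum_add_sum_u hvu hu, sub_self]

end DualSummand

theorem stmt4_general (g n : ℕ) (hng : n ≤ g)
    (v : Fin n → Fin (2 * g) → ℤ) (hv : IsUnimodular v) :
    ∃ u : Fin n → Fin (2 * g) → ℤ,
      IsUnimodular u ∧
      (∀ i j, symp (u i) (u j) = 0) ∧
      (∀ i j, symp (v i) (u j) = if i = j then 1 else 0) ∧
      (∀ x ∈ Submodule.span ℤ (Set.range v) ⊔ Submodule.span ℤ (Set.range u),
        (∀ y ∈ Submodule.span ℤ (Set.range v) ⊔ Submodule.span ℤ (Set.range u),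
          symp x y = 0) → x = 0) ∧
      IsCompl (Submodule.span ℤ (Set.range v) ⊔ Submodule.span ℤ (Set.range u))
        (perp ((Submodule.span ℤ (Set.range v) ⊔ Submodule.span ℤ (Set.range u) :
          Submodule ℤ (Fin (2 * g) → ℤ)) : Set (Fin (2 * g) → ℤ))) ∧
      ∀ T : Submodule ℤ (Fin (2 * g) → ℤ),
        IsCompl (Submodule.span ℤ (Set.range v) ⊔ Submodule.span ℤ (Set.range u)) T →
        (∀ s ∈ Submodule.span ℤ (Set.range v) ⊔ Submodule.span ℤ (Set.range u),
          ∀ t ∈ T, symp s t = 0) →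
        T = perp ((Submodule.span ℤ (Set.range v) ⊔ Submodule.span ℤ (Set.range u) :
          Submodule ℤ (Fin (2 * g) → ℤ)) : Set (Fin (2 * g) → ℤ)) := by
  obtain ⟨q, hq⟩ := exists_symp_eq_ite_of_isUnimodular hv
  obtain ⟨u, hu⟩ := exists_isPartialDual hng (sympSurjective_of_symp_eq_ite hq) Finset.univ
  have hvu : ∀ i j, symp (v i) (u j) = if i = j then 1 else 0 := fun i j =>
    hu.symp_eq i j (Finset.mem_univ j)
  have huu : ∀ i j, symp (u i) (u j) = 0 := fun i j =>
    hu.isotropic i (Finset.mem_univ i) j (Finset.mem_univ j)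
  have hcompl := isCompl_perp (eq_zero_of_mem_sup_span hvu huu)
    (exists_sub_mem_perp_sup_span hvu huu)
  exact ⟨u, isUnimodular_of_symp_eq_ite hvu, huu, hvu, eq_zero_of_mem_sup_span hvu huu, hcompl,
    fun T hT horth => eq_perp_of_isCompl hcompl hT horth⟩

/-- existence of a dual summand, Prop. 2.11 (i). -/
theorem stmt4 (g n : ℕ) (hn : 1 ≤ n) (hng : n ≤ g)
    (v : Fin n → Fin (2 * g) → ℤ) (hv : IsUnimodular v) :
    ∃ u : Fin n → Fin (2 * g) → ℤ,
      IsUnimodular u ∧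
      (∀ i j, symp (u i) (u j) = 0) ∧
      (∀ i j, symp (v i) (u j) = if i = j then 1 else 0) ∧
      (∀ x ∈ Submodule.span ℤ (Set.range v) ⊔ Submodule.span ℤ (Set.range u),
        (∀ y ∈ Submodule.span ℤ (Set.range v) ⊔ Submodule.span ℤ (Set.range u),
          symp x y = 0) → x = 0) ∧
      IsCompl (Submodule.span ℤ (Set.range v) ⊔ Submodule.span ℤ (Set.range u))
        (perp ((Submodule.span ℤ (Set.range v) ⊔ Submodule.span ℤ (Set.range u) :
          Submodule ℤ (Fin (2 * g) → ℤ)) : Set (Fin (2 * g) → ℤ))) ∧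
      ∀ T : Submodule ℤ (Fin (2 * g) → ℤ),
        IsCompl (Submodule.span ℤ (Set.range v) ⊔ Submodule.span ℤ (Set.range u)) T →
        (∀ s ∈ Submodule.span ℤ (Set.range v) ⊔ Submodule.span ℤ (Set.range u),
          ∀ t ∈ T, symp s t = 0) →
        T = perp ((Submodule.span ℤ (Set.range v) ⊔ Submodule.span ℤ (Set.range u) :
          Submodule ℤ (Fin (2 * g) → ℤ)) : Set (Fin (2 * g) → ℤ)) :=
  stmt4_general g n hng v hv

end Paper
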